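/- arXiv:1601.01140 — 6 statements merged into one kernel-verified Lean document; each statement's English description precedes it below -/
import Mathlib

section
/- Let w be an (m, M)-regular distance generating function with respect to (Z, ‖·‖), meaning (dw)_z(z') ≥ (m/2)‖z - z'‖² and ‖∇w(z) - ∇w(z')‖* ≤ M‖z - z'‖ for all z, z' ∈ Z. Then for all t > 0 and z, z', z̃ ∈ Z: (1 + 1/t)⁻¹ (dw)_z(z') ≤ (M/m) [(dw)_z(z̃) + t (dw)_{z̃}(z')]. -/
/-!
Three-point identity: `D z z' = D z z̃ + D z̃ z' + ⟪∇w z̃ - ∇w z, z' - z̃⟫`. The cross term is at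
most `M ‖z - z̃‖ ‖z̃ - z'‖ ≤ M (‖z - z̃‖² / (2t) + t ‖z̃ - z'‖² / 2)`, and strong convexity bounds
both squares by `2/m` times the matching Bregman divergences. The leftover `D z z̃ + D z̃ z'` is
absorbed because `M / m ≥ 1`, except in the degenerate case `M < m`: there, adding the lower
bounds for `D z z'` and `D z' z` and comparing with the Lipschitz bound shows that `D` vanishes
on `Z`.
-/

open RealInnerProductSpace

noncomputable def bregmanDiv {E : Type*} [NormedAddCommGroup E] [InnerProductSpace ℝ E]
    (w : E → ℝ) (g : E → E) (z z' : E) : ℝ :=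
  w z' - w z - ⟪g z, z' - z⟫

lemma inv_one_add_inv_mul_le_of_le_add_add_mul {m M t a b A B C : ℝ} (hm : 0 < m)
    (hmM : m ≤ M) (ht : 0 < t) (hA : m / 2 * a ^ 2 ≤ A) (hB : m / 2 * b ^ 2 ≤ B)
    (hC : C ≤ A + B + M * a * b) :
    (1 + 1 / t)⁻¹ * C ≤ M / m * (A + t * B) := by
  have hk : 1 ≤ M / m := (one_le_div hm).mpr hmM
  have hA0 : 0 ≤ A := le_trans (by positivity) hA
  have hB0 : 0 ≤ B := le_trans (by positivity) hB
  have young : a * b ≤ a ^ 2 / (2 * t) + t * b ^ 2 / 2 := by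
    rw [div_add_div _ _ (by positivity) two_ne_zero, le_div_iff₀ (by positivity)]
    nlinarith [sq_nonneg (a - t * b)]
  have cross : M * a * b ≤ M / m * (A / t + t * B) := by
    calc M * a * b ≤ M * (a ^ 2 / (2 * t) + t * b ^ 2 / 2) := by
          rw [mul_assoc]
          gcongr
          linarith
      _ = M / m * ((m / 2 * a ^ 2) / t + t * (m / 2 * b ^ 2)) := by field_simp
      _ ≤ M / m * (A / t + t * B) := by gcongr
  rw [inv_mul_le_iff₀ (by positivity)]
  calc C ≤ A + B + M * a * b := hC
    _ ≤ M / m * (A + B) + M / m * (A / t + t * B) := by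
        gcongr
        exact le_mul_of_one_le_left (by positivity) hk
    _ = (1 + 1 / t) * (M / m * (A + t * B)) := by field_simp; ring

section Bregman

variable {E : Type*} [NormedAddCommGroup E] [InnerProductSpace ℝ E] (w : E → ℝ) (g : E → E)

lemma bregmanDiv_three_point (z y z' : E) :
    bregmanDiv w g z z' = bregmanDiv w g z y + bregmanDiv w g y z' + ⟪g y - g z, z' - y⟫ := by
  simp only [bregmanDiv, inner_sub_left, inner_sub_right]
  ring

lemma bregmanDiv_add_bregmanDiv_swap (x y : E) :
    bregmanDiv w g x y + bregmanDiv w g y x = ⟪g x - g y, x - y⟫ := by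
  simp only [bregmanDiv, inner_sub_left, inner_sub_right]
  ring

variable {w g} {Zs : Set E} {p : Seminorm ℝ E} {m M : ℝ}

lemma bregmanDiv_le_add_add_mul
    (hreg2 : ∀ z ∈ Zs, ∀ z' ∈ Zs, ∀ u : E, ⟪g z - g z', u⟫ ≤ M * p (z - z') * p u)
    {z y z' : E} (hz : z ∈ Zs) (hy : y ∈ Zs) :
    bregmanDiv w g z z' ≤
      bregmanDiv w g z y + bregmanDiv w g y z' + M * p (z - y) * p (y - z') := by
  have hcross := hreg2 y hy z hz (z' - y)
  rw [map_sub_rev p y z, map_sub_rev p z' y] at hcross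
  rw [bregmanDiv_three_point w g z y z']
  gcongr

lemma bregmanDiv_eq_zero_of_lt
    (hreg1 : ∀ z ∈ Zs, ∀ z' ∈ Zs, m / 2 * p (z - z') ^ 2 ≤ bregmanDiv w g z z')
    (hreg2 : ∀ z ∈ Zs, ∀ z' ∈ Zs, ∀ u : E, ⟪g z - g z', u⟫ ≤ M * p (z - z') * p u)
    (hMm : M < m) {x y : E} (hx : x ∈ Zs) (hy : y ∈ Zs) :
    bregmanDiv w g x y = 0 := by
  have hxy := hreg1 x hx y hy
  have hyx := hreg1 y hy x hx
  rw [map_sub_rev p y x] at hyx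
  have hsum := bregmanDiv_add_bregmanDiv_swap w g x y
  have hupper : ⟪g x - g y, x - y⟫ ≤ M * p (x - y) ^ 2 := by
    simpa only [sq, mul_assoc] using hreg2 x hx y hy (x - y)
  have hp : p (x - y) ^ 2 = 0 := le_antisymm (by nlinarith) (sq_nonneg _)
  rw [hp] at hxy hyx hupper
  linarith

end Bregman

theorem stmt2_general {E : Type*} [NormedAddCommGroup E] [InnerProductSpace ℝ E]
    (w : E → ℝ) (g : E → E) (Zs : Set E) (p : Seminorm ℝ E)
    (m M : ℝ) (hm : 0 < m)
    (D : E → E → ℝ)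
    (hD : ∀ z z' : E, D z z' = w z' - w z - ⟪g z, z' - z⟫)
    (hreg1 : ∀ z ∈ Zs, ∀ z' ∈ Zs, m / 2 * p (z - z') ^ 2 ≤ D z z')
    (hreg2 : ∀ z ∈ Zs, ∀ z' ∈ Zs, ∀ u : E, ⟪g z - g z', u⟫ ≤ M * p (z - z') * p u)
    (t : ℝ) (ht : 0 < t) (z z' ztl : E) (hz : z ∈ Zs) (hz' : z' ∈ Zs) (hztl : ztl ∈ Zs) :
    (1 + 1 / t)⁻¹ * D z z' ≤ M / m * (D z ztl + t * D ztl z') := by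
  obtain rfl : D = bregmanDiv w g := funext₂ hD
  rcases le_or_gt m M with hmM | hMm
  · exact inv_one_add_inv_mul_le_of_le_add_add_mul hm hmM ht (hreg1 z hz ztl hztl)
      (hreg1 ztl hztl z' hz') (bregmanDiv_le_add_add_mul hreg2 hz hztl)
  · have hzero {x y : E} (hx : x ∈ Zs) (hy : y ∈ Zs) : bregmanDiv w g x y = 0 :=
      bregmanDiv_eq_zero_of_lt hreg1 hreg2 hMm hx hy
    simp only [hzero hz hz', hzero hz hztl, hzero hztl hz', mul_zero, add_zero, le_refl]

/-- If `w` is an `(m, M)`-regular distance generating function with respect to `(Zs, p)`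
(lower quadratic growth of the Bregman distance and `M`-Lipschitz gradient in the dual
seminorm, expressed pointwise as `⟪g z - g z', u⟫ ≤ M * p (z - z') * p u`), then for all
`t > 0` and `z, z', ztl ∈ Zs`:
`(1 + 1/t)⁻¹ (dw)_z(z') ≤ (M/m) [(dw)_z(ztl) + t (dw)_{ztl}(z')]`. -/
theorem stmt2 {E : Type*} [NormedAddCommGroup E] [InnerProductSpace ℝ E]
    [FiniteDimensional ℝ E]
    (w : E → ℝ) (g : E → E) (Zs : Set E) (p : Seminorm ℝ E)
    (m M : ℝ) (hm : 0 < m) (hM : 0 < M)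
    (hZconv : Convex ℝ Zs)
    (hg : ∀ z ∈ Zs, HasGradientAt w (g z) z)
    (D : E → E → ℝ)
    (hD : ∀ z z' : E, D z z' = w z' - w z - ⟪g z, z' - z⟫)
    (hreg1 : ∀ z ∈ Zs, ∀ z' ∈ Zs, m / 2 * p (z - z') ^ 2 ≤ D z z')
    (hreg2 : ∀ z ∈ Zs, ∀ z' ∈ Zs, ∀ u : E, ⟪g z - g z', u⟫ ≤ M * p (z - z') * p u)
    (t : ℝ) (ht : 0 < t) (z z' ztl : E) (hz : z ∈ Zs) (hz' : z' ∈ Zs) (hztl : ztl ∈ Zs) :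
    (1 + 1 / t)⁻¹ * D z z' ≤ M / m * (D z ztl + t * D ztl z') :=
  stmt2_general w g Zs p m M hm D hD hreg1 hreg2 t ht z z' ztl hz hz' hztl
end

section
/- Let δ ∈ (0,1] and define w : ℝⁿ → (-∞,∞] by w(x) = Σᵢ (xᵢ + δ/n) log(xᵢ + δ/n) for x with xᵢ + δ/n > 0 (and +∞ otherwise), and let Z = {x ∈ ℝⁿ : Σ xᵢ = 1, xᵢ ≥ 0}. Then for all x, y ∈ Z, the Bregman distance satisfies (dw)_x(y) ≥ (1/(2(1+δ)))‖x - y‖₁² and ‖∇w(x) - ∇w(y)‖_∞ ≤ (n/δ)‖x - y‖₁, i.e., w is (1/(1+δ), n/δ)-regular with respect to (Z, ‖·‖₁). -/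
/-! Put `aᵢ = xᵢ + δ/n` and `bᵢ = yᵢ + δ/n`, so that `Σ aᵢ = Σ bᵢ = 1 + δ` and every coordinate
is at least `δ/n`. The Bregman distance of `w` is `Σ aᵢ · klFun (bᵢ/aᵢ)`, and the elementary bound
`klFun t ≥ 3(t-1)²/(2(t+2))` (the best one with a linear denominator: both sides agree to third
order at `t = 1`) bounds each term below by `3(aᵢ-bᵢ)²/(2(bᵢ+2aᵢ))`. Cauchy–Schwarz against the
weights `bᵢ + 2aᵢ`, which sum to `3(1+δ)`, gives the first inequality. The second is the Lipschitz
bound `n/δ` of `log` on `[δ/n, ∞)`. -/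

open Finset Real InformationTheory

theorem isMinOn_Ioi_of_hasDerivAt {f f' : ℝ → ℝ} {a c : ℝ} (hac : a < c)
    (hf : ∀ t ∈ Set.Ioi a, HasDerivAt f (f' t) t)
    (hsign : ∀ t ∈ Set.Ioi a, 0 ≤ (t - c) * f' t) :
    IsMinOn f (Set.Ioi a) c := by
  have hcont : ContinuousOn f (Set.Ioi a) := fun t ht =>
    (hf t ht).continuousAt.continuousWithinAt
  intro t (ht : a < t)
  rcases le_total c t with hct | htc
  · refine monotoneOn_of_hasDerivWithinAt_nonneg (f' := f') (convex_Ici c)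
      (hcont.mono fun s hs => hac.trans_le hs) (fun s hs => ?_) (fun s hs => ?_)
      Set.self_mem_Ici hct hct
    all_goals rw [interior_Ici] at hs
    · exact (hf s (hac.trans hs)).hasDerivWithinAt
    · exact nonneg_of_mul_nonneg_right (hsign s (hac.trans hs)) (sub_pos.2 hs)
  · refine antitoneOn_of_hasDerivWithinAt_nonpos (f' := f') (convex_Ioc a c)
      (hcont.mono Set.Ioc_subset_Ioi_self) (fun s hs => ?_) (fun s hs => ?_)
      ⟨ht, htc⟩ ⟨hac, le_rfl⟩ htc
    all_goals rw [interior_Ioc] at hs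
    · exact (hf s hs.1).hasDerivWithinAt
    · exact nonpos_of_mul_nonneg_right (hsign s hs.1) (sub_neg.2 hs.2)

namespace Real

private theorem monotoneOn_log_sub_two_mul_sub_one_div_add_one :
    MonotoneOn (fun t => log t - 2 * (t - 1) / (t + 1)) (Set.Ioi 0) := by
  refine monotoneOn_of_hasDerivWithinAt_nonneg (f' := fun t => (t - 1) ^ 2 / (t * (t + 1) ^ 2))
    (convex_Ioi 0) (fun t (ht : 0 < t) => ?_) (fun t ht => ?_) (fun t ht => ?_)
  all_goals try rw [interior_Ioi, Set.mem_Ioi] at ht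
  · exact ((continuousAt_log ht.ne').sub
      (by fun_prop (disch := positivity))).continuousWithinAt
  · have hd := (hasDerivAt_log ht.ne').sub
      ((((hasDerivAt_id t).sub_const 1).const_mul 2).div ((hasDerivAt_id t).add_const 1)
        (by positivity))
    refine (hd.congr_deriv ?_).hasDerivWithinAt
    simp only [id]
    field_simp
    ring
  · positivity

theorem two_mul_sub_one_div_add_one_le_log {t : ℝ} (ht : 1 ≤ t) :
    2 * (t - 1) / (t + 1) ≤ log t := by
  have := monotoneOn_log_sub_two_mul_sub_one_div_add_one (zero_lt_one' ℝ)
    (zero_lt_one.trans_le ht) ht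
  norm_num at this
  linarith

theorem log_le_two_mul_sub_one_div_add_one {t : ℝ} (h0 : 0 < t) (ht : t ≤ 1) :
    log t ≤ 2 * (t - 1) / (t + 1) := by
  have := monotoneOn_log_sub_two_mul_sub_one_div_add_one h0 (zero_lt_one' ℝ) ht
  norm_num at this
  linarith

theorem abs_log_sub_log_le {m a b : ℝ} (hm : 0 < m) (ha : m ≤ a) (hb : m ≤ b) :
    |log a - log b| ≤ |a - b| / m := by
  wlog hab : b ≤ a generalizing a b
  · rw [abs_sub_comm, abs_sub_comm a b]
    exact this hb ha (le_of_not_ge hab)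
  have hb0 : 0 < b := hm.trans_le hb
  rw [abs_of_nonneg (sub_nonneg.2 (log_le_log hb0 hab)), abs_of_nonneg (sub_nonneg.2 hab)]
  calc log a - log b = log (a / b) := (log_div (hb0.trans_le hab).ne' hb0.ne').symm
    _ ≤ a / b - 1 := log_le_sub_one_of_pos (div_pos (hb0.trans_le hab) hb0)
    _ = (a - b) / b := by field_simp
    _ ≤ (a - b) / m := by gcongr

end Real

namespace InformationTheory

theorem three_mul_sq_div_le_klFun {t : ℝ} (ht : 0 < t) :
    3 * (t - 1) ^ 2 / (2 * (t + 2)) ≤ klFun t := by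
  have hmin : IsMinOn (fun t => klFun t - 3 * (t - 1) ^ 2 / (2 * (t + 2))) (Set.Ioi 0) 1 := by
    refine isMinOn_Ioi_of_hasDerivAt
      (f' := fun t => log t - 3 * (t - 1) * (t + 5) / (2 * (t + 2) ^ 2)) zero_lt_one
      (fun t (ht : 0 < t) => ?_) (fun t (ht : 0 < t) => ?_)
    · have hd := (hasDerivAt_klFun ht.ne').sub
        ((((hasDerivAt_id t).sub_const 1).pow 2).const_mul 3 |>.div
          (((hasDerivAt_id t).add_const 2).const_mul 2) (by positivity))
      refine hd.congr_deriv ?_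
      simp only [id, Pi.pow_apply]
      field_simp
      ring
    · have hsplit : (t - 1) * (log t - 3 * (t - 1) * (t + 5) / (2 * (t + 2) ^ 2)) =
          (t - 1) * (log t - 2 * (t - 1) / (t + 1)) +
            (t - 1) ^ 4 / (2 * (t + 1) * (t + 2) ^ 2) := by
        field_simp
        ring
      have hlog : 0 ≤ (t - 1) * (log t - 2 * (t - 1) / (t + 1)) := by
        rcases le_total 1 t with h | h
        · exact mul_nonneg (by linarith) (by linarith [two_mul_sub_one_div_add_one_le_log h])
        · exact mul_nonneg_of_nonpos_of_nonpos (by linarith)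
            (by linarith [log_le_two_mul_sub_one_div_add_one ht h])
      rw [hsplit]
      positivity
  have := hmin (Set.mem_Ioi.2 ht)
  simp only [klFun_one] at this
  norm_num at this
  linarith

theorem sq_sub_le_mul_mul_klFun_div {a b : ℝ} (ha : 0 < a) (hb : 0 < b) :
    (a - b) ^ 2 ≤ 2 * (b + 2 * a) / 3 * (a * klFun (b / a)) := by
  have h := three_mul_sq_div_le_klFun (div_pos hb ha)
  calc (a - b) ^ 2 = 2 * (b + 2 * a) / 3 * (a * (3 * (b / a - 1) ^ 2 / (2 * (b / a + 2)))) := by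
        field_simp
        ring
    _ ≤ 2 * (b + 2 * a) / 3 * (a * klFun (b / a)) := by gcongr

theorem sq_sum_abs_sub_le_mul_sum_mul_klFun_div {ι : Type*} (s : Finset ι) {a b : ι → ℝ}
    (ha : ∀ i ∈ s, 0 < a i) (hb : ∀ i ∈ s, 0 < b i) :
    (∑ i ∈ s, |a i - b i|) ^ 2 ≤
      (∑ i ∈ s, 2 * (b i + 2 * a i) / 3) * ∑ i ∈ s, a i * klFun (b i / a i) :=
  sum_sq_le_sum_mul_sum_of_sq_le_mul s
    (fun i hi => by linarith [ha i hi, hb i hi])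
    (fun i hi => mul_nonneg (ha i hi).le (klFun_nonneg (div_pos (hb i hi) (ha i hi)).le))
    (fun i hi => (sq_abs _).trans_le (sq_sub_le_mul_mul_klFun_div (ha i hi) (hb i hi)))

theorem mul_klFun_div_eq {a b : ℝ} (ha : a ≠ 0) (hb : b ≠ 0) :
    a * klFun (b / a) = b * log b - a * log a - (log a + 1) * (b - a) := by
  rw [klFun_apply, log_div hb ha]
  field_simp
  ring

end InformationTheory

theorem sum_add_div_card {n : ℕ} (hn : 0 < n) (z : Fin n → ℝ) (c : ℝ) :
    ∑ i, (z i + c / n) = ∑ i, z i + c := by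
  rw [sum_add_distrib, sum_const, card_univ, Fintype.card_fin, nsmul_eq_mul]
  field_simp

theorem stmt8_general (n : ℕ) (hn : 0 < n) (δ : ℝ) (hδ0 : 0 < δ)
    (w : (Fin n → ℝ) → ℝ)
    (hw : ∀ x, w x = ∑ i, (x i + δ / n) * Real.log (x i + δ / n))
    (gw : (Fin n → ℝ) → Fin n → ℝ)
    (hgw : ∀ x i, gw x i = Real.log (x i + δ / n) + 1)
    (D : (Fin n → ℝ) → (Fin n → ℝ) → ℝ)
    (hD : ∀ x y, D x y = w y - w x - ∑ i, gw x i * (y i - x i))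
    (x y : Fin n → ℝ)
    (hx : (∑ i, x i) = 1 ∧ ∀ i, 0 ≤ x i)
    (hy : (∑ i, y i) = 1 ∧ ∀ i, 0 ≤ y i) :
    1 / (2 * (1 + δ)) * (∑ i, |x i - y i|) ^ 2 ≤ D x y ∧
    ∀ i, |gw x i - gw y i| ≤ n / δ * ∑ j, |x j - y j| := by
  obtain ⟨hxs, hxn⟩ := hx
  obtain ⟨hys, hyn⟩ := hy
  have hm : 0 < δ / n := by positivity
  have ha : ∀ i, δ / n ≤ x i + δ / n := fun i => le_add_of_nonneg_left (hxn i)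
  have hb : ∀ i, δ / n ≤ y i + δ / n := fun i => le_add_of_nonneg_left (hyn i)
  constructor
  · have hDxy : D x y = ∑ i, (x i + δ / n) * klFun ((y i + δ / n) / (x i + δ / n)) := by
      simp only [hD, hw, hgw, ← sum_sub_distrib]
      refine sum_congr rfl fun i _ => ?_
      rw [mul_klFun_div_eq (hm.trans_le (ha i)).ne' (hm.trans_le (hb i)).ne',
        add_sub_add_right_eq_sub]
    have hweights : ∑ i, 2 * ((y i + δ / n) + 2 * (x i + δ / n)) / 3 = 2 * (1 + δ) := by
      simp only [← sum_div, ← mul_sum, sum_add_distrib, sum_add_div_card hn, hxs, hys]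
      ring
    have key := sq_sum_abs_sub_le_mul_sum_mul_klFun_div univ
      (fun i _ => hm.trans_le (ha i)) (fun i _ => hm.trans_le (hb i))
    simp only [add_sub_add_right_eq_sub, hweights, ← hDxy] at key
    rw [one_div_mul_eq_div, div_le_iff₀ (by positivity)]
    linarith
  · intro i
    calc |gw x i - gw y i| = |log (x i + δ / n) - log (y i + δ / n)| := by
          rw [hgw, hgw, add_sub_add_right_eq_sub]
      _ ≤ |x i - y i| / (δ / n) := by
          simpa only [add_sub_add_right_eq_sub] using abs_log_sub_log_le hm (ha i) (hb i)
      _ = n / δ * |x i - y i| := by field_simp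
      _ ≤ n / δ * ∑ j, |x j - y j| := by
          gcongr
          exact single_le_sum (f := fun j => |x j - y j|) (fun j _ => abs_nonneg _) (mem_univ i)

/-- The entropy-like function `w(x) = Σᵢ (xᵢ + δ/n) log(xᵢ + δ/n)` is
`(1/(1+δ), n/δ)`-regular on the unit simplex with respect to the ℓ₁-norm:
`(dw)_x(y) ≥ (1/(2(1+δ))) ‖x - y‖₁²` and `‖∇w(x) - ∇w(y)‖_∞ ≤ (n/δ) ‖x - y‖₁`. -/
theorem stmt8 (n : ℕ) (hn : 0 < n) (δ : ℝ) (hδ0 : 0 < δ) (hδ1 : δ ≤ 1)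
    (w : (Fin n → ℝ) → ℝ)
    (hw : ∀ x, w x = ∑ i, (x i + δ / n) * Real.log (x i + δ / n))
    (gw : (Fin n → ℝ) → Fin n → ℝ)
    (hgw : ∀ x i, gw x i = Real.log (x i + δ / n) + 1)
    (D : (Fin n → ℝ) → (Fin n → ℝ) → ℝ)
    (hD : ∀ x y, D x y = w y - w x - ∑ i, gw x i * (y i - x i))
    (x y : Fin n → ℝ)
    (hx : (∑ i, x i) = 1 ∧ ∀ i, 0 ≤ x i)
    (hy : (∑ i, y i) = 1 ∧ ∀ i, 0 ≤ y i) :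
    1 / (2 * (1 + δ)) * (∑ i, |x i - y i|) ^ 2 ≤ D x y ∧
    ∀ i, |gw x i - gw y i| ≤ n / δ * ∑ j, |x j - y j| :=
  stmt8_general n hn δ hδ0 w hw gw hgw D hD x y hx hy
end

section
/- (NE-HPE descent inequality) Suppose z_{k-1}, z_k ∈ int(dom w), z̃_k ∈ dom w, λ_k > 0, ε_k ≥ 0, η_k, η_{k-1} ≥ 0, σ ∈ [0,1), τ ∈ (0,1), r_k := (1/λ_k)(∇w(z_{k-1}) - ∇w(z_k)), and the error condition (dw)_{z_k}(z̃_k) + λ_k ε_k + η_k ≤ σ (dw)_{z_{k-1}}(z̃_k) + (1-τ)η_{k-1} holds. Then for every z ∈ dom w: (dw)_{z_{k-1}}(z) - (dw)_{z_k}(z) + (1-τ)η_{k-1} ≥ (1-σ)(dw)_{z_{k-1}}(z̃_k) + λ_k(⟨r_k, z̃_k - z⟩ + ε_k) + η_k. -/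
open RealInnerProductSpace

section Bregman

variable {E : Type*} [SeminormedAddCommGroup E] [InnerProductSpace ℝ E]

/-- The Bregman distance `(dw)_z(z')` of `w`, with `g` playing the role of `∇w`. -/
def bregmanDist (w : E → ℝ) (g : E → E) (z z' : E) : ℝ :=
  w z' - w z - ⟪g z, z' - z⟫

theorem bregmanDist_three_point (w : E → ℝ) (g : E → E) (x y u z : E) :
    bregmanDist w g x z - bregmanDist w g y z - (bregmanDist w g x u - bregmanDist w g y u) =
      ⟪g x - g y, u - z⟫ := by
  simp only [bregmanDist, inner_sub_left, inner_sub_right]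
  ring

end Bregman

theorem stmt11_general {E : Type*} [NormedAddCommGroup E] [InnerProductSpace ℝ E]
    (w : E → ℝ) (g : E → E)
    (D : E → E → ℝ)
    (hD : ∀ z z' : E, D z z' = w z' - w z - ⟪g z, z' - z⟫)
    (zkm zk ztlk : E) (lamk εk ηk ηkm σ τ : ℝ)
    (hlamk : 0 < lamk)
    (rk : E) (hrk : rk = (1 / lamk) • (g zkm - g zk))
    (herr : D zk ztlk + lamk * εk + ηk ≤ σ * D zkm ztlk + (1 - τ) * ηkm) :
    ∀ z : E, (1 - σ) * D zkm ztlk + lamk * (⟪rk, ztlk - z⟫ + εk) + ηk ≤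
      D zkm z - D zk z + (1 - τ) * ηkm := by
  intro z
  obtain rfl : D = bregmanDist w g := funext₂ hD
  have hr : lamk * ⟪rk, ztlk - z⟫ = ⟪g zkm - g zk, ztlk - z⟫ := by
    rw [hrk, real_inner_smul_left, ← mul_assoc, mul_one_div_cancel hlamk.ne', one_mul]
  have := bregmanDist_three_point w g zkm zk ztlk z
  linarith

/-- NE-HPE descent inequality: under the relative error condition
`(dw)_{z_k}(z̃_k) + λ_k ε_k + η_k ≤ σ (dw)_{z_{k-1}}(z̃_k) + (1-τ) η_{k-1}`, for every `z`:
`(dw)_{z_{k-1}}(z) - (dw)_{z_k}(z) + (1-τ)η_{k-1}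
  ≥ (1-σ)(dw)_{z_{k-1}}(z̃_k) + λ_k(⟪r_k, z̃_k - z⟫ + ε_k) + η_k`. -/
theorem stmt11 {E : Type*} [NormedAddCommGroup E] [InnerProductSpace ℝ E]
    [FiniteDimensional ℝ E]
    (w : E → ℝ) (g : E → E)
    (hg : ∀ x : E, HasGradientAt w (g x) x)
    (D : E → E → ℝ)
    (hD : ∀ z z' : E, D z z' = w z' - w z - ⟪g z, z' - z⟫)
    (zkm zk ztlk : E) (lamk εk ηk ηkm σ τ : ℝ)
    (hlamk : 0 < lamk) (hεk : 0 ≤ εk) (hηk : 0 ≤ ηk) (hηkm : 0 ≤ ηkm)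
    (hσ0 : 0 ≤ σ) (hσ1 : σ < 1) (hτ0 : 0 < τ) (hτ1 : τ < 1)
    (rk : E) (hrk : rk = (1 / lamk) • (g zkm - g zk))
    (herr : D zk ztlk + lamk * εk + ηk ≤ σ * D zkm ztlk + (1 - τ) * ηkm) :
    ∀ z : E, (1 - σ) * D zkm ztlk + lamk * (⟪rk, ztlk - z⟫ + εk) + ηk ≤
      D zkm z - D zk z + (1 - τ) * ηkm :=
  stmt11_general w g D hD zkm zk ztlk lamk εk ηk ηkm σ τ hlamk rk hrk herr
end

section
/- (Geometric contraction of regularized NE-HPE) Under the setting of Framework 1 — w an (m,M)-regular distance generating function w.r.t. (Z, ‖·‖), S μ-monotone w.r.t. w with μ > 0, operators S, T maximal monotone with Dom(T) ⊂ Z, iterates satisfying r_k = (1/λ_k)(∇w(z_{k-1}) - ∇w(z_k)) ∈ (S + T^{[ε_k]})(z̃_k), λ_k ≥ λ > 0, and (dw)_{z_k}(z̃_k) + λ_k ε_k + η_k ≤ σ(dw)_{z_{k-1}}(z̃_k) + (1-τ)η_{k-1} with σ ∈ [0,1), τ ∈ (0,1) — define τ̲ := min{ (m/M)(1/(1-σ)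 + 1/(μλ))⁻¹, τ }. Then τ̲ ∈ (0,1) and for every z* with 0 ∈ (S+T)(z*) and every k > ℓ ≥ 0: (dw)_{z_k}(z*) + η_k ≤ (1 - τ̲)^{k-ℓ} [(dw)_{z_ℓ}(z*) + η_ℓ]. -/
open RealInnerProductSpace Filter Topology

/-!
Write `D` for the Bregman distance of `w`. The four-point identity
`⟪∇w x - ∇w x', y - u⟫ = (D x u - D x' u) - (D x y - D x' y)`, applied to the inclusion for `r_k`
and a solution `z*`, together with the `μ`-monotonicity of `S` and the definition of the
`ε`-enlargement, gives a descent inequality. With the error condition it shows that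
`D z_k z* + η_k` is at most `D z_{k-1} z* + (1-τ) η_{k-1}` minus
`(1-σ) D z_{k-1} z̃_k + λ μ D z̃_k z*`. Regularity bounds `D` between `(m/2)‖·‖²` and `(M/2)‖·‖²`,
so the triangle inequality and `(1/a + 1/b)⁻¹ (α+β)² ≤ aα² + bβ²` bound the subtracted term below
by `(m/M)(1/(1-σ) + 1/(μλ))⁻¹ D z_{k-1} z*`: each step contracts by `1 - τ̲`.

The upper bound `D ≤ (M/2)‖·‖²` needs no differentiation: on a subdivision of `[z, z']` into `n`
equal pieces, `D ≥ 0` and the Lipschitz bound on `∇w` control each increment of `D z ·`, and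
summing gives `(M/2)(1 + 1/n)‖z' - z‖²`.
-/

noncomputable def bregman {E : Type*} [NormedAddCommGroup E] [InnerProductSpace ℝ E]
    (w : E → ℝ) (g : E → E) (z z' : E) : ℝ :=
  w z' - w z - ⟪g z, z' - z⟫

lemma le_pow_sub_mul_of_succ_le_mul {V : ℕ → ℝ} {q : ℝ} (hq : 0 ≤ q)
    (h : ∀ j, V (j + 1) ≤ q * V j) {ℓ k : ℕ} (hℓk : ℓ ≤ k) :
    V k ≤ q ^ (k - ℓ) * V ℓ := by
  induction k, hℓk using Nat.le_induction with
  | base => simp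
  | succ k hℓk ih =>
    calc V (k + 1) ≤ q * V k := h k
      _ ≤ q * (q ^ (k - ℓ) * V ℓ) := mul_le_mul_of_nonneg_left ih hq
      _ = q ^ (k + 1 - ℓ) * V ℓ := by rw [Nat.sub_add_comm hℓk, pow_succ]; ring

lemma inv_one_div_add_one_div_mul_sq_le {a b : ℝ} (ha : 0 < a) (hb : 0 < b) (α β : ℝ) :
    (1 / a + 1 / b)⁻¹ * (α + β) ^ 2 ≤ a * α ^ 2 + b * β ^ 2 := by
  have hab : (1 / a + 1 / b)⁻¹ = a * b / (a + b) := by field_simp; ring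
  rw [hab, div_mul_eq_mul_div, div_le_iff₀ (by positivity)]
  nlinarith [sq_nonneg (a * α - b * β)]

section Bregman

variable {E : Type*} [NormedAddCommGroup E] [InnerProductSpace ℝ E] {w : E → ℝ} {g : E → E}

@[simp]
lemma bregman_self (z : E) : bregman w g z z = 0 := by
  simp [bregman]

lemma inner_sub_eq_bregman (x x' y u : E) :
    ⟪g x - g x', y - u⟫ =
      (bregman w g x u - bregman w g x' u) - (bregman w g x y - bregman w g x' y) := by
  simp only [bregman, inner_sub_left, inner_sub_right]
  ring

variable {Zs : Set E} {p : Seminorm ℝ E} {m M : ℝ}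

lemma bregman_nonneg_of_lower (hm : 0 ≤ m)
    (hlow : ∀ z ∈ Zs, ∀ z' ∈ Zs, m / 2 * p (z - z') ^ 2 ≤ bregman w g z z') :
    ∀ z ∈ Zs, ∀ z' ∈ Zs, 0 ≤ bregman w g z z' := fun z hz z' hz' =>
  (by positivity : 0 ≤ m / 2 * p (z - z') ^ 2).trans (hlow z hz z' hz')

section Upper

variable (hnonneg : ∀ z ∈ Zs, ∀ z' ∈ Zs, 0 ≤ bregman w g z z')
  (hlip : ∀ z ∈ Zs, ∀ z' ∈ Zs, ∀ u : E, ⟪g z - g z', u⟫ ≤ M * p (z - z') * p u)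
include hnonneg hlip

lemma bregman_add_smul_le {z v : E} {s t : ℝ} (hs : 0 ≤ s) (hst : s ≤ t) (hz : z ∈ Zs)
    (ha : z + s • v ∈ Zs) (hb : z + t • v ∈ Zs) :
    bregman w g z (z + t • v) ≤ bregman w g z (z + s • v) + M * t * (t - s) * p v ^ 2 := by
  -- the four-point identity gives `D z b = D z a + ⟪g b - g z, b - a⟫ - D b a`
  have key := inner_sub_eq_bregman (w := w) (g := g) (z + t • v) z (z + t • v) (z + s • v)
  have hba : z + t • v - (z + s • v) = (t - s) • v := by module
  have hlipb := hlip _ hb _ hz (z + t • v - (z + s • v))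
  rw [add_sub_cancel_left, hba, map_smul_eq_mul, map_smul_eq_mul, Real.norm_of_nonneg (by linarith),
    Real.norm_of_nonneg (by linarith)] at hlipb
  rw [hba, bregman_self] at key
  linarith [hnonneg _ hb _ ha]

lemma bregman_nat_div_smul_le (hZ : Convex ℝ Zs) {z z' : E} (hz : z ∈ Zs) (hz' : z' ∈ Zs)
    {n : ℕ} {i : ℕ} (hi : i ≤ n) :
    bregman w g z (z + ((i : ℝ) / n) • (z' - z)) ≤
      M * p (z' - z) ^ 2 * (i * (i + 1)) / (2 * n ^ 2) := by
  have hmem : ∀ j ≤ n, z + ((j : ℝ) / n) • (z' - z) ∈ Zs := fun j hj =>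
    hZ.add_smul_sub_mem hz hz' ⟨by positivity, div_le_one_of_le₀ (by exact_mod_cast hj) (by positivity)⟩
  induction i with
  | zero => simp
  | succ i ih =>
    have hn : (0 : ℝ) < n := by exact_mod_cast (by omega : 0 < n)
    calc bregman w g z (z + (((i + 1 : ℕ) : ℝ) / n) • (z' - z))
        ≤ bregman w g z (z + ((i : ℝ) / n) • (z' - z)) +
            M * (((i + 1 : ℕ) : ℝ) / n) * (((i + 1 : ℕ) : ℝ) / n - (i : ℝ) / n) * p (z' - z) ^ 2 :=
          bregman_add_smul_le hnonneg hlip (by positivity)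
            (by gcongr; exact_mod_cast i.le_succ) hz (hmem i (by omega)) (hmem (i + 1) hi)
      _ ≤ M * p (z' - z) ^ 2 * (i * (i + 1)) / (2 * n ^ 2) +
            M * (((i + 1 : ℕ) : ℝ) / n) * (((i + 1 : ℕ) : ℝ) / n - (i : ℝ) / n) * p (z' - z) ^ 2 := by
          gcongr; exact ih (by omega)
      _ = M * p (z' - z) ^ 2 * (((i + 1 : ℕ) : ℝ) * ((i + 1 : ℕ) + 1)) / (2 * n ^ 2) := by
          field_simp; push_cast; ring

lemma bregman_le_half_mul_sq (hZ : Convex ℝ Zs) {z z' : E} (hz : z ∈ Zs) (hz' : z' ∈ Zs) :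
    bregman w g z z' ≤ M / 2 * p (z - z') ^ 2 := by
  set c := M / 2 * p (z - z') ^ 2
  have hbound : ∀ n : ℕ, 0 < n → bregman w g z z' ≤ c + c / n := by
    intro n hn
    have hn' : (0 : ℝ) < n := by exact_mod_cast hn
    have h := bregman_nat_div_smul_le hnonneg hlip hZ hz hz' le_rfl (n := n)
    rw [div_self hn'.ne', one_smul, add_sub_cancel, ← map_sub_rev] at h
    convert h using 1
    field_simp
    ring
  have hlim : Tendsto (fun n : ℕ => c + c / n) atTop (𝓝 (c + 0)) :=
    tendsto_const_nhds.add (tendsto_const_div_atTop_nhds_zero_nat c)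
  rw [add_zero] at hlim
  exact ge_of_tendsto hlim (eventually_atTop.mpr ⟨1, hbound⟩)

end Upper

lemma mul_bregman_le_of_regular (hm : 0 ≤ m) (hM : 0 < M) {a b : ℝ} (ha : 0 < a) (hb : 0 < b)
    {x y u : E} (hxu : bregman w g x u ≤ M / 2 * p (x - u) ^ 2)
    (hxy : m / 2 * p (x - y) ^ 2 ≤ bregman w g x y)
    (hyu : m / 2 * p (y - u) ^ 2 ≤ bregman w g y u) :
    m / M * (1 / a + 1 / b)⁻¹ * bregman w g x u ≤ a * bregman w g x y + b * bregman w g y u := by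
  have htri : p (x - u) ≤ p (x - y) + p (y - u) := by
    simpa only [sub_add_sub_cancel] using map_add_le_add p (x - y) (y - u)
  calc m / M * (1 / a + 1 / b)⁻¹ * bregman w g x u
      ≤ m / M * (1 / a + 1 / b)⁻¹ * (M / 2 * (p (x - y) + p (y - u)) ^ 2) := by
        gcongr
        exact hxu.trans (by gcongr)
    _ = m / 2 * ((1 / a + 1 / b)⁻¹ * (p (x - y) + p (y - u)) ^ 2) := by
        field_simp
    _ ≤ m / 2 * (a * p (x - y) ^ 2 + b * p (y - u) ^ 2) := by
        gcongr
        exact inv_one_div_add_one_div_mul_sq_le ha hb _ _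
    _ ≤ a * bregman w g x y + b * bregman w g y u := by
        linarith [mul_le_mul_of_nonneg_left hxy ha.le, mul_le_mul_of_nonneg_left hyu hb.le]

lemma bregman_descent {μ lam ε : ℝ} {x x' y u ra rb a b : E}
    (hlam : 0 < lam) (hr : (1 / lam) • (g x - g x') = ra + rb) (hab : a + b = 0)
    (hS : μ * (bregman w g y u + bregman w g u y) ≤ ⟪y - u, ra - a⟫)
    (hT : -ε ≤ ⟪rb - b, y - u⟫) :
    lam * (μ * (bregman w g y u + bregman w g u y) - ε) ≤
      (bregman w g x u - bregman w g x' u) - (bregman w g x y - bregman w g x' y) := by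
  have hgx : g x - g x' = lam • (ra + rb) := by
    rw [← hr, smul_smul, mul_one_div_cancel hlam.ne', one_smul]
  have hsplit : ⟪ra + rb, y - u⟫ = ⟪y - u, ra - a⟫ + ⟪rb - b, y - u⟫ := by
    rw [real_inner_comm (ra - a), ← inner_add_left, eq_neg_of_add_eq_zero_left hab]
    congr 1
    abel
  rw [← inner_sub_eq_bregman, hgx, real_inner_smul_left, hsplit]
  gcongr
  linarith

end Bregman

theorem stmt13_general {E : Type*} [NormedAddCommGroup E] [InnerProductSpace ℝ E]
    (w : E → ℝ) (g : E → E) (Zs : Set E) (p : Seminorm ℝ E)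
    (m M : ℝ) (hm : 0 < m) (hM : 0 < M)
    (hZconv : Convex ℝ Zs)
    (D : E → E → ℝ)
    (hD : ∀ z z' : E, D z z' = w z' - w z - ⟪g z, z' - z⟫)
    (hreg1 : ∀ z ∈ Zs, ∀ z' ∈ Zs, m / 2 * p (z - z') ^ 2 ≤ D z z')
    (hreg2 : ∀ z ∈ Zs, ∀ z' ∈ Zs, ∀ u : E, ⟪g z - g z', u⟫ ≤ M * p (z - z') * p u)
    (S T : E → Set E) (μ lam σ τ : ℝ)
    (hμ : 0 < μ) (hlam : 0 < lam) (hσ1 : σ < 1) (hτ0 : 0 < τ) (hτ1 : τ < 1)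
    (hDomT : ∀ x : E, (T x).Nonempty → x ∈ Zs)
    (hSmono : ∀ z ∈ Zs, ∀ z' ∈ Zs, ∀ s ∈ S z, ∀ s' ∈ S z',
      μ * (D z z' + D z' z) ≤ ⟪z - z', s - s'⟫)
    (zk ztlk : ℕ → E) (lamk εk ηk : ℕ → ℝ)
    (hzZ : ∀ k, zk k ∈ Zs) (hztlZ : ∀ k, ztlk k ∈ Zs)
    (hlamk : ∀ k, lam ≤ lamk k) (hη : ∀ k, 0 ≤ ηk k)
    (hincl : ∀ k : ℕ, 1 ≤ k → ∃ ra rb : E, ra ∈ S (ztlk k) ∧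
      (∀ z' v' : E, v' ∈ T z' → -(εk k) ≤ ⟪rb - v', ztlk k - z'⟫) ∧
      (1 / lamk k) • (g (zk (k - 1)) - g (zk k)) = ra + rb)
    (herr : ∀ k : ℕ, 1 ≤ k →
      D (zk k) (ztlk k) + lamk k * εk k + ηk k ≤
        σ * D (zk (k - 1)) (ztlk k) + (1 - τ) * ηk (k - 1))
    (tlow : ℝ)
    (htlow : tlow = min (m / M * (1 / (1 - σ) + 1 / (μ * lam))⁻¹) τ) :
    (0 < tlow ∧ tlow < 1) ∧
    ∀ zstar : E, (∃ a b : E, a ∈ S zstar ∧ b ∈ T zstar ∧ a + b = 0) →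
      ∀ k ℓ : ℕ, ℓ < k →
        D (zk k) zstar + ηk k ≤ (1 - tlow) ^ (k - ℓ) * (D (zk ℓ) zstar + ηk ℓ) := by
  obtain rfl : D = bregman w g := funext₂ hD
  have hθ : 0 < m / M * (1 / (1 - σ) + 1 / (μ * lam))⁻¹ := by
    have := sub_pos.2 hσ1
    positivity
  have htθ : tlow ≤ m / M * (1 / (1 - σ) + 1 / (μ * lam))⁻¹ := htlow ▸ min_le_left _ _
  have htτ : tlow ≤ τ := htlow ▸ min_le_right _ _
  refine ⟨⟨htlow ▸ lt_min hθ hτ0, htτ.trans_lt hτ1⟩, ?_⟩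
  rintro zstar ⟨a, b, ha, hb, hab⟩ k ℓ hℓk
  have hzstar : zstar ∈ Zs := hDomT zstar ⟨b, hb⟩
  have hnonneg := bregman_nonneg_of_lower hm.le hreg1
  refine le_pow_sub_mul_of_succ_le_mul (V := fun j => bregman w g (zk j) zstar + ηk j)
    (by linarith) (fun j => ?_) hℓk.le
  obtain ⟨ra, rb, hra, hrb, hr⟩ := hincl (j + 1) (by omega)
  have herr := herr (j + 1) (by omega)
  simp only [Nat.add_sub_cancel] at hr herr
  have hlamk0 : 0 < lamk (j + 1) := hlam.trans_le (hlamk _)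
  have hdesc := bregman_descent hlamk0 hr hab
    (hSmono _ (hztlZ (j + 1)) _ hzstar _ hra _ ha) (hrb zstar b hb)
  have hgeo := mul_bregman_le_of_regular hm.le hM (sub_pos.2 hσ1) (mul_pos hμ hlam)
    (bregman_le_half_mul_sq hnonneg hreg2 hZconv (hzZ j) hzstar)
    (hreg1 _ (hzZ j) _ (hztlZ (j + 1))) (hreg1 _ (hztlZ (j + 1)) _ hzstar)
  have hDuy := hnonneg _ hzstar _ (hztlZ (j + 1))
  have hDyu := hnonneg _ (hztlZ (j + 1)) _ hzstar
  have hDxu := hnonneg _ (hzZ j) _ hzstar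
  have hlam_le := mul_le_mul_of_nonneg_right (hlamk (j + 1)) (mul_nonneg hμ.le hDyu)
  have hDuy_term := mul_nonneg hlamk0.le (mul_nonneg hμ.le hDuy)
  have hθ_le := mul_le_mul_of_nonneg_right htθ hDxu
  have hτ_le := mul_le_mul_of_nonneg_right (sub_le_sub_left htτ 1) (hη j)
  linarith

/-- Geometric contraction of the regularized NE-HPE framework (Framework 1): with
`w` `(m,M)`-regular w.r.t. `(Zs, p)`, `S` `μ`-monotone w.r.t. `w`, iterates satisfying
`r_k = (1/λ_k)(∇w(z_{k-1}) - ∇w(z_k)) ∈ (S + T^{[ε_k]})(z̃_k)`, `λ_k ≥ λ > 0`, and the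
error condition, and `τ̲ := min{(m/M)(1/(1-σ) + 1/(μλ))⁻¹, τ}`, one has `τ̲ ∈ (0,1)`
and `(dw)_{z_k}(z*) + η_k ≤ (1-τ̲)^{k-ℓ}[(dw)_{z_ℓ}(z*) + η_ℓ]` for every solution
`z*` of `0 ∈ (S+T)(z)` and all `k > ℓ ≥ 0`. -/
theorem stmt13 {E : Type*} [NormedAddCommGroup E] [InnerProductSpace ℝ E]
    [FiniteDimensional ℝ E]
    (w : E → ℝ) (g : E → E) (Zs : Set E) (p : Seminorm ℝ E)
    (m M : ℝ) (hm : 0 < m) (hM : 0 < M)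
    (hZconv : Convex ℝ Zs)
    (hg : ∀ z ∈ Zs, HasGradientAt w (g z) z)
    (D : E → E → ℝ)
    (hD : ∀ z z' : E, D z z' = w z' - w z - ⟪g z, z' - z⟫)
    (hreg1 : ∀ z ∈ Zs, ∀ z' ∈ Zs, m / 2 * p (z - z') ^ 2 ≤ D z z')
    (hreg2 : ∀ z ∈ Zs, ∀ z' ∈ Zs, ∀ u : E, ⟪g z - g z', u⟫ ≤ M * p (z - z') * p u)
    (S T : E → Set E) (μ lam σ τ : ℝ)
    (hμ : 0 < μ) (hlam : 0 < lam) (hσ0 : 0 ≤ σ) (hσ1 : σ < 1) (hτ0 : 0 < τ) (hτ1 : τ < 1)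
    (hDomT : ∀ x : E, (T x).Nonempty → x ∈ Zs)
    (hSmono : ∀ z ∈ Zs, ∀ z' ∈ Zs, ∀ s ∈ S z, ∀ s' ∈ S z',
      μ * (D z z' + D z' z) ≤ ⟪z - z', s - s'⟫)
    (hTmono : ∀ z z' v v' : E, v ∈ T z → v' ∈ T z' → 0 ≤ ⟪z - z', v - v'⟫)
    (zk ztlk : ℕ → E) (lamk εk ηk : ℕ → ℝ)
    (hzZ : ∀ k, zk k ∈ Zs) (hztlZ : ∀ k, ztlk k ∈ Zs)
    (hlamk : ∀ k, lam ≤ lamk k) (hε : ∀ k, 0 ≤ εk k) (hη : ∀ k, 0 ≤ ηk k)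
    (hincl : ∀ k : ℕ, 1 ≤ k → ∃ ra rb : E, ra ∈ S (ztlk k) ∧
      (∀ z' v' : E, v' ∈ T z' → -(εk k) ≤ ⟪rb - v', ztlk k - z'⟫) ∧
      (1 / lamk k) • (g (zk (k - 1)) - g (zk k)) = ra + rb)
    (herr : ∀ k : ℕ, 1 ≤ k →
      D (zk k) (ztlk k) + lamk k * εk k + ηk k ≤
        σ * D (zk (k - 1)) (ztlk k) + (1 - τ) * ηk (k - 1))
    (tlow : ℝ)
    (htlow : tlow = min (m / M * (1 / (1 - σ) + 1 / (μ * lam))⁻¹) τ) :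
    (0 < tlow ∧ tlow < 1) ∧
    ∀ zstar : E, (∃ a b : E, a ∈ S zstar ∧ b ∈ T zstar ∧ a + b = 0) →
      ∀ k ℓ : ℕ, ℓ < k →
        D (zk k) zstar + ηk k ≤ (1 - tlow) ^ (k - ℓ) * (D (zk ℓ) zstar + ηk ℓ) :=
  stmt13_general w g Zs p m M hm hM hZconv D hD hreg1 hreg2 S T μ lam σ τ hμ hlam hσ1 hτ0 hτ1 hDomT
    hSmono zk ztlk lamk εk ηk hzZ hztlZ hlamk hη hincl herr tlow htlow
end

section
/- For every θ ∈ [1, (1+√5)/2), the 2×2 symmetric matrix M(θ) with entries M₁₁ = θ (= σ(1+θ)-1 at σ=1), M₁₂ = M₂₁ = θ(1-θ) (= (σ+θ-1)(1-θ) at σ=1), M₂₂ = 1-(θ-1)² (= σ-(θ-1)² at σ=1, τ=0) is positive definite; equivalently θ(1-(θ-1)²) - θ²(1-θ)² > 0 and θ > 0. -/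
/-!
The determinant factors as `θ² (1 + θ - θ²)` and `1 + θ - θ² = -(θ - φ)(θ - ψ)` is positive
exactly between the golden ratio `φ` and its conjugate `ψ < 0`; positivity of the corner entry
and of the determinant then give positive definiteness of the `2 × 2` matrix.
-/

open Matrix Real goldenRatio

theorem Matrix.posDef_fin_two_of_pos_of_det_pos {R : Type*} [Field R] [LinearOrder R]
    [IsStrictOrderedRing R] [StarRing R] [TrivialStar R] {a b c : R}
    (ha : 0 < a) (hdet : 0 < a * c - b ^ 2) : (!![a, b; b, c]).PosDef := by
  refine PosDef.of_dotProduct_mulVec_pos ?_ fun x hx ↦ ?_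
  · ext i j
    fin_cases i <;> fin_cases j <;> simp
  have hform : star x ⬝ᵥ (!![a, b; b, c] *ᵥ x) = a * x 0 ^ 2 + 2 * b * x 0 * x 1 + c * x 1 ^ 2 := by
    simp only [star_trivial, dotProduct, mulVec, Fin.sum_univ_two, of_apply, cons_val',
      cons_val_zero, cons_val_one, empty_val', cons_val_fin_one]
    ring
  have hcomplete : a * (a * x 0 ^ 2 + 2 * b * x 0 * x 1 + c * x 1 ^ 2)
      = (a * x 0 + b * x 1) ^ 2 + (a * c - b ^ 2) * x 1 ^ 2 := by ring
  rw [hform]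
  refine pos_of_mul_pos_right (a := a) ?_ ha.le
  rw [hcomplete]
  by_cases h1 : x 1 = 0
  · have h0 : x 0 ≠ 0 := fun h0 ↦ hx (funext fun i ↦ by fin_cases i <;> simp [h0, h1])
    simpa [h1] using sq_pos_of_ne_zero (mul_ne_zero ha.ne' h0)
  · exact add_pos_of_nonneg_of_pos (sq_nonneg _) (mul_pos hdet (sq_pos_of_ne_zero h1))

theorem Real.sq_sub_self_sub_one_neg {θ : ℝ} (hψ : ψ < θ) (hφ : θ < φ) : θ ^ 2 - θ - 1 < 0 := by
  have hfactor : θ ^ 2 - θ - 1 = (θ - φ) * (θ - ψ) := by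
    linear_combination goldenRatio_add_goldenConj * θ - goldenRatio_mul_goldenConj
  rw [hfactor]
  exact mul_neg_of_neg_of_pos (sub_neg.2 hφ) (sub_pos.2 hψ)

/-- For every `θ ∈ [1, (1+√5)/2)`, the symmetric matrix with entries
`M₁₁ = θ`, `M₁₂ = M₂₁ = θ(1-θ)`, `M₂₂ = 1-(θ-1)²` is positive definite; equivalently
`θ > 0` and `θ(1-(θ-1)²) - θ²(1-θ)² > 0`. -/
theorem stmt18 (θ : ℝ) (h1 : 1 ≤ θ) (h2 : θ < (1 + Real.sqrt 5) / 2) :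
    (!![θ, θ * (1 - θ); θ * (1 - θ), 1 - (θ - 1) ^ 2] : Matrix (Fin 2) (Fin 2) ℝ).PosDef ∧
    (0 < θ ∧ 0 < θ * (1 - (θ - 1) ^ 2) - θ ^ 2 * (1 - θ) ^ 2) := by
  have hθ : 0 < θ := by linarith
  have hquad : θ ^ 2 - θ - 1 < 0 := sq_sub_self_sub_one_neg (goldenConj_neg.trans hθ) h2
  have hdet : 0 < θ * (1 - (θ - 1) ^ 2) - θ ^ 2 * (1 - θ) ^ 2 := by
    have hfactor : θ * (1 - (θ - 1) ^ 2) - θ ^ 2 * (1 - θ) ^ 2 = θ ^ 2 * -(θ ^ 2 - θ - 1) := by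
      ring
    rw [hfactor]
    exact mul_pos (pow_pos hθ 2) (neg_pos.2 hquad)
  refine ⟨posDef_fin_two_of_pos_of_det_pos hθ ?_, hθ, hdet⟩
  rwa [mul_pow]
end

section
/- Let E : Z → Z̃ be a linear map between finite-dimensional real inner product spaces, e ∈ Im(E), and h : Z → (-∞,∞] a proper closed convex function such that inf{h(z) : Ez = e} < ∞. If ri(dom h*) ∩ Im(E*) ≠ ∅ (where h* is the Fenchel conjugate and E* the adjoint), then the problem inf{h(z) + (1/2)‖Ez - e‖² : z ∈ Z} has an optimal solution. -/
/-!
Write `F z = h z + ½‖E z - e‖²`. By Fenchel–Moreau, `h` is the supremum of its affine minorants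
`⟪v, ·⟫ - c`, whose slopes `v` lie in `dom h*`; hence `h`, and with it `F`, is invariant under
translation by the subspace `L = ker E ∩ (dom h*)ᗮ`, and it suffices to minimise `F` on `Lᗮ`.
There the sublevel sets of `F` are compact: an unbounded one would have an asymptotic direction
`d ∈ Lᗮ`, with `E d = 0` because `‖E z - e‖` stays bounded on it (compare `F` with the minorant
of slope `E* u₀`), and with `⟪v, d⟫ ≤ 0` for all `v ∈ dom h*`. As `E* u₀` lies in the relative
interior of `dom h*` and `⟪E* u₀, d⟫ = ⟪u₀, E d⟫ = 0`, all these inequalities are equalities,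
so `d ∈ L ∩ Lᗮ = 0`.
-/

open RealInnerProductSpace Filter Topology

theorem EReal.coe_le_of_forall_le_coe_imp_lt {x : EReal} {a : ℝ}
    (H : ∀ t : ℝ, x ≤ t → a < t) : (a : EReal) ≤ x :=
  le_of_not_ge fun hx => lt_irrefl a (H a hx)

def ConvexEReal {Z : Type*} [AddCommGroup Z] [Module ℝ Z] (h : Z → EReal) : Prop :=
  ∀ z z' : Z, ∀ a b : ℝ, 0 ≤ a → 0 ≤ b → a + b = 1 →
    h (a • z + b • z') ≤ (a : EReal) * h z + (b : EReal) * h z'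

section ConvexEReal

variable {Z : Type*} [NormedAddCommGroup Z] [InnerProductSpace ℝ Z] {h : Z → EReal}

theorem LowerSemicontinuous.isClosed_realEpigraph {X : Type*} [TopologicalSpace X]
    {f : X → EReal} (hf : LowerSemicontinuous f) : IsClosed {p : X × ℝ | f p.1 ≤ p.2} :=
  hf.isClosed_epigraph.preimage
    (continuous_fst.prodMk (continuous_coe_real_ereal.comp continuous_snd))

theorem convex_realEpigraph (hconvex : ConvexEReal h) :
    Convex ℝ {p : Z × ℝ | h p.1 ≤ p.2} := by
  rintro ⟨y, s⟩ hy ⟨y', s'⟩ hy' a b ha hb hab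
  calc h (a • y + b • y') ≤ (a : EReal) * h y + (b : EReal) * h y' := hconvex y y' a b ha hb hab
    _ ≤ (a : EReal) * s + (b : EReal) * s' := by
      gcongr
      exacts [hy, hy']
    _ = ((a • (y, s) + b • (y', s')).2 : ℝ) := by simp [EReal.coe_mul]

theorem exists_inner_add_mul_eq [CompleteSpace Z] (f : StrongDual ℝ (Z × ℝ)) :
    ∃ (v : Z) (β : ℝ), ∀ y t, f (y, t) = ⟪v, y⟫ + β * t := by
  refine ⟨(InnerProductSpace.toDual ℝ Z).symm (f.comp (.inl ℝ Z ℝ)), f (0, 1), fun y t => ?_⟩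
  rw [InnerProductSpace.toDual_symm_apply, mul_comm, ← smul_eq_mul, ← map_smul,
    ContinuousLinearMap.comp_apply, ← map_add]
  simp

theorem exists_separation_of_lt_realEpigraph [CompleteSpace Z] (hlsc : LowerSemicontinuous h)
    (hconvex : ConvexEReal h) {z : Z} {r : ℝ} (hr : (r : EReal) < h z) :
    ∃ (v : Z) (β u : ℝ), (∀ y (t : ℝ), h y ≤ t → ⟪v, y⟫ + β * t < u) ∧ u < ⟪v, z⟫ + β * r := by
  obtain ⟨f, u, hf, hfz⟩ := geometric_hahn_banach_closed_point (convex_realEpigraph hconvex)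
    hlsc.isClosed_realEpigraph (x := (z, r)) hr.not_ge
  obtain ⟨v, β, hvβ⟩ := exists_inner_add_mul_eq f
  exact ⟨v, β, u, fun y t hyt => hvβ y t ▸ hf (y, t) hyt, hvβ z r ▸ hfz⟩

def IsAffineMinorant (h : Z → EReal) (v : Z) (c : ℝ) : Prop :=
  ∀ y, ((⟪v, y⟫ - c : ℝ) : EReal) ≤ h y

theorem isAffineMinorant_of_separation {v : Z} {β u : ℝ} (hβ : β < 0)
    (hsep : ∀ y (t : ℝ), h y ≤ t → ⟪v, y⟫ + β * t < u) :
    IsAffineMinorant h ((-β)⁻¹ • v) (u / -β) := fun y =>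
  EReal.coe_le_of_forall_le_coe_imp_lt fun t ht => by
    have := hsep y t ht
    rw [real_inner_smul_left, ← div_eq_inv_mul, div_sub_div_same, div_lt_iff₀ (neg_pos.2 hβ)]
    linarith

theorem exists_isAffineMinorant_gt [CompleteSpace Z] (hlsc : LowerSemicontinuous h)
    (hconvex : ConvexEReal h) {z₁ : Z} {t₁ : ℝ} (hz₁ : h z₁ = t₁) {z : Z} {r : ℝ}
    (hr : (r : EReal) < h z) :
    ∃ v c, IsAffineMinorant h v c ∧ r < ⟪v, z⟫ - c := by
  obtain ⟨v₁, β₁, u₁, hsep₁, hz₁sep⟩ := exists_separation_of_lt_realEpigraph hlsc hconvex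
    (z := z₁) (r := t₁ - 1) (by rw [hz₁]; exact_mod_cast sub_one_lt t₁)
  have hβ₁ : β₁ < 0 := by nlinarith [hsep₁ z₁ t₁ hz₁.le]
  obtain ⟨v, β, u, hsep, hzsep⟩ := exists_separation_of_lt_realEpigraph hlsc hconvex hr
  have hβ : β ≤ 0 := by
    by_contra! hβ
    set t := max t₁ ((u - ⟪v, z₁⟫) / β)
    have := hsep z₁ t (hz₁.trans_le (by exact_mod_cast le_max_left _ _))
    have := (div_le_iff₀ hβ).1 (le_max_right t₁ ((u - ⟪v, z₁⟫) / β))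
    linarith
  -- The second separator may be vertical (`β = 0`); tilting it by a small multiple of the
  -- non-vertical first one keeps it separating `(z, r)` from the epigraph.
  obtain ⟨M, hM, hMgap⟩ := exists_pos_mul_lt (sub_pos.2 hzsep) |u₁ - ⟪v₁, z⟫ - β₁ * r|
  have hβM : β + M * β₁ < 0 := by nlinarith
  refine ⟨_, _, isAffineMinorant_of_separation hβM (v := v + M • v₁) (u := u + M * u₁) ?_, ?_⟩
  · intro y t hyt
    have := hsep y t hyt
    have := hsep₁ y t hyt
    rw [inner_add_left, real_inner_smul_left]
    nlinarith
  · rw [real_inner_smul_left, ← div_eq_inv_mul, div_sub_div_same, lt_div_iff₀ (neg_pos.2 hβM),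
      inner_add_left, real_inner_smul_left]
    nlinarith [mul_le_mul_of_nonneg_right (le_abs_self (u₁ - ⟪v₁, z⟫ - β₁ * r)) hM.le]

noncomputable def fenchelConjugate (h : Z → EReal) (v : Z) : EReal :=
  ⨆ z, ((⟪v, z⟫ : ℝ) : EReal) - h z

theorem fenchelConjugate_le_of_isAffineMinorant {v : Z} {c : ℝ} (hvc : IsAffineMinorant h v c) :
    fenchelConjugate h v ≤ c :=
  iSup_le fun y => EReal.sub_le_of_le_add <| by
    calc ((⟪v, y⟫ : ℝ) : EReal) = c + ((⟪v, y⟫ - c : ℝ) : EReal) := by norm_cast; ring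
      _ ≤ c + h y := by gcongr; exact hvc y

theorem inner_le_add_of_le_of_fenchelConjugate_le {y v : Z} {a s : ℝ} (hy : h y ≤ a)
    (hv : fenchelConjugate h v ≤ s) : ⟪v, y⟫ ≤ a + s := by
  have : ((⟪v, y⟫ : ℝ) : EReal) - a ≤ s :=
    (EReal.sub_le_sub le_rfl hy).trans
      ((le_iSup (fun z => ((⟪v, z⟫ : ℝ) : EReal) - h z) y).trans hv)
  rw [← EReal.coe_sub, EReal.coe_le_coe_iff] at this
  linarith

theorem apply_add_le_of_forall_inner_eq_zero [CompleteSpace Z] (hlsc : LowerSemicontinuous h)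
    (hconvex : ConvexEReal h) {z₁ : Z} {t₁ : ℝ} (hz₁ : h z₁ = t₁) {d : Z}
    (hd : ∀ v, fenchelConjugate h v ≠ ⊤ → ⟪v, d⟫ = 0) (z : Z) : h (z + d) ≤ h z := by
  by_contra! hlt
  obtain ⟨r, hzr, hrd⟩ := EReal.lt_iff_exists_real_btwn.1 hlt
  obtain ⟨v, c, hvc, hrv⟩ := exists_isAffineMinorant_gt hlsc hconvex hz₁ hrd
  have hvd :=
    hd v ((fenchelConjugate_le_of_isAffineMinorant hvc).trans_lt (EReal.coe_lt_top c)).ne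
  have := EReal.coe_lt_coe_iff.1 ((hvc z).trans_lt hzr)
  rw [inner_add_right, hvd, add_zero] at hrv
  linarith

end ConvexEReal

theorem exists_pos_smul_sub_add_mem_of_mem_intrinsicInterior {W : Type*}
    [NormedAddCommGroup W] [NormedSpace ℝ W] {s : Set W} {x y : W}
    (hx : x ∈ intrinsicInterior ℝ s) (hy : y ∈ s) :
    ∃ ε : ℝ, 0 < ε ∧ ε • (x - y) + x ∈ s := by
  obtain ⟨p, hp, rfl⟩ := hx
  have hmem (t : ℝ) : t • ((p : W) - y) + p ∈ affineSpan ℝ s := by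
    simpa [vsub_eq_sub, vadd_eq_add] using
      AffineSubspace.smul_vsub_vadd_mem _ t p.2 (subset_affineSpan ℝ s hy) p.2
  let γ : ℝ → affineSpan ℝ s := fun t => ⟨t • ((p : W) - y) + p, hmem t⟩
  have hγ : Continuous γ := by fun_prop
  have hγ0 : γ 0 = p := by ext; simp [γ]
  have hev : ∀ᶠ t in 𝓝[>] (0 : ℝ), γ t ∈ ((↑) : affineSpan ℝ s → W) ⁻¹' s :=
    nhdsWithin_le_nhds <|
      hγ.continuousAt.preimage_mem_nhds (hγ0 ▸ mem_interior_iff_mem_nhds.1 hp)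
  obtain ⟨ε, hε, hεs⟩ := (hev.and self_mem_nhdsWithin).exists
  exact ⟨ε, hεs, hε⟩

theorem inner_eq_zero_of_mem_intrinsicInterior {Z : Type*} [NormedAddCommGroup Z]
    [InnerProductSpace ℝ Z] {s : Set Z} {x d : Z} (hx : x ∈ intrinsicInterior ℝ s)
    (hs : ∀ v ∈ s, ⟪v, d⟫ ≤ 0) (hxd : ⟪x, d⟫ = 0) {y : Z} (hy : y ∈ s) : ⟪y, d⟫ = 0 := by
  obtain ⟨ε, hε, hεs⟩ := exists_pos_smul_sub_add_mem_of_mem_intrinsicInterior hx hy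
  have := hs _ hεs
  rw [inner_add_left, real_inner_smul_left, inner_sub_left, hxd] at this
  nlinarith [hs y hy]

theorem exists_ne_zero_forall_inner_nonpos_of_not_isBounded {Z : Type*} [NormedAddCommGroup Z]
    [InnerProductSpace ℝ Z] [FiniteDimensional ℝ Z] {S : Set Z} (hS : ¬Bornology.IsBounded S) :
    ∃ d ≠ 0, ∀ (v : Z) (C : ℝ), (∀ z ∈ S, ⟪v, z⟫ ≤ C) → ⟪v, d⟫ ≤ 0 := by
  rw [Metric.isBounded_iff_subset_closedBall 0] at hS
  choose z hzS hz using fun n : ℕ => Set.not_subset.1 (not_exists.1 hS n)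
  have hnorm (n : ℕ) : (n : ℝ) < ‖z n‖ := by simpa using hz n
  have hpos (n : ℕ) : 0 < ‖z n‖ := (Nat.cast_nonneg n).trans_lt (hnorm n)
  have hsphere (n : ℕ) : ‖z n‖⁻¹ • z n ∈ Metric.sphere (0 : Z) 1 := by
    simp [norm_smul, (hpos n).ne']
  obtain ⟨d, hd, φ, hφ, hlim⟩ := (isCompact_sphere (0 : Z) 1).tendsto_subseq hsphere
  have hinv : Tendsto (fun n => ‖z (φ n)‖⁻¹) atTop (𝓝 0) :=
    tendsto_inv_atTop_zero.comp <| tendsto_atTop_mono (fun n => (hnorm (φ n)).le)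
      (tendsto_natCast_atTop_atTop.comp hφ.tendsto_atTop)
  refine ⟨d, ne_zero_of_mem_unit_sphere ⟨d, hd⟩, fun v C hC => ?_⟩
  refine le_of_tendsto_of_tendsto' ((continuous_const.inner continuous_id).tendsto d |>.comp hlim)
    (by simpa using hinv.mul_const C) fun n => ?_
  simp only [Function.comp_apply, id, real_inner_smul_right]
  exact mul_le_mul_of_nonneg_left (hC _ (hzS _)) (inv_nonneg.2 (hpos _).le)

theorem exists_forall_le_of_isBounded_orthogonal_inter_sublevel {Z γ : Type*}
    [NormedAddCommGroup Z] [InnerProductSpace ℝ Z] [FiniteDimensional ℝ Z]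
    [LinearOrder γ] [TopologicalSpace γ] [OrderTopology γ]
    {F : Z → γ} (hF : LowerSemicontinuous F) (L : Submodule ℝ Z)
    (hL : ∀ d ∈ L, ∀ z, F (z + d) = F z) {z₁ : Z} {b : γ} (hz₁ : F z₁ ≤ b)
    (hbdd : Bornology.IsBounded ((Lᗮ : Set Z) ∩ F ⁻¹' Set.Iic b)) :
    ∃ z₀, ∀ z, F z₀ ≤ F z := by
  have hproj (z : Z) : z - L.starProjection z ∈ Lᗮ ∧ F (z - L.starProjection z) = F z :=
    ⟨L.sub_starProjection_mem_orthogonal z,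
      by rw [sub_eq_add_neg, hL _ (L.neg_mem (L.starProjection_apply_mem z))]⟩
  have hK : IsCompact ((Lᗮ : Set Z) ∩ F ⁻¹' Set.Iic b) :=
    Metric.isCompact_of_isClosed_isBounded
      (L.isClosed_orthogonal.inter (hF.isClosed_preimage b)) hbdd
  obtain ⟨z₀, ⟨-, hz₀b⟩, hmin⟩ := (hF.lowerSemicontinuousOn _).exists_isMinOn
    (s := (Lᗮ : Set Z) ∩ F ⁻¹' Set.Iic b)
    ⟨z₁ - L.starProjection z₁, (hproj z₁).1, (hproj z₁).2.trans_le hz₁⟩ hK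
  refine ⟨z₀, fun z => ?_⟩
  rcases le_or_gt (F z) b with hzb | hbz
  · exact (hproj z).2 ▸ hmin ⟨(hproj z).1, (hproj z).2.trans_le hzb⟩
  · exact hz₀b.trans hbz.le

theorem exists_norm_le_of_inner_add_half_norm_sub_sq_le {V : Type*} [NormedAddCommGroup V]
    [InnerProductSpace ℝ V] (u e : V) (K : ℝ) :
    ∃ R, ∀ x : V, ⟪u, x⟫ + 1 / 2 * ‖x - e‖ ^ 2 ≤ K → ‖x‖ ≤ R := by
  refine ⟨2 * ‖u‖ + 2 + |K - ⟪u, e⟫| + ‖e‖, fun x hx => ?_⟩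
  have hcs : -(‖u‖ * ‖x - e‖) ≤ ⟪u, x - e⟫ := neg_le_of_abs_le (abs_real_inner_le_norm u _)
  have hxe : ‖x - e‖ ≤ 2 * ‖u‖ + 2 + |K - ⟪u, e⟫| := by
    rw [inner_sub_right] at hcs
    by_contra! hlt
    have h2 : 2 ≤ ‖x - e‖ - 2 * ‖u‖ := by linarith [abs_nonneg (K - ⟪u, e⟫)]
    nlinarith [le_abs_self (K - ⟪u, e⟫), norm_nonneg u,
      mul_le_mul_of_nonneg_left h2 (norm_nonneg (x - e))]
  linarith [norm_le_norm_sub_add x e]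

section Penalized

variable {Z Zt : Type*} [NormedAddCommGroup Z] [InnerProductSpace ℝ Z]
  [NormedAddCommGroup Zt] [InnerProductSpace ℝ Zt]
  (E : Z →ₗ[ℝ] Zt) (e : Zt) {h : Z → EReal}

noncomputable def penalizedObjective (h : Z → EReal) (z : Z) : EReal :=
  h z + ((1 / 2 * ‖E z - e‖ ^ 2 : ℝ) : EReal)

noncomputable def flatDirections (h : Z → EReal) : Submodule ℝ Z :=
  LinearMap.ker E ⊓ (Submodule.span ℝ {v | fenchelConjugate h v ≠ ⊤})ᗮ

theorem mem_flatDirections_iff {d : Z} :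
    d ∈ flatDirections E h ↔ E d = 0 ∧ ∀ v, fenchelConjugate h v ≠ ⊤ → ⟪v, d⟫ = 0 := by
  rw [flatDirections, Submodule.mem_inf, LinearMap.mem_ker, ← Submodule.span_singleton_le_iff_mem,
    ← Submodule.isOrtho_iff_le, Submodule.isOrtho_comm, Submodule.isOrtho_span]
  simp

theorem lowerSemicontinuous_penalizedObjective [FiniteDimensional ℝ Z]
    (hlsc : LowerSemicontinuous h) :
    LowerSemicontinuous (penalizedObjective E e h) :=
  hlsc.add' (continuous_coe_real_ereal.comp (by fun_prop)).lowerSemicontinuous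
    fun _ => EReal.continuousAt_add (.inr (EReal.coe_ne_bot _)) (.inr (EReal.coe_ne_top _))

theorem penalizedObjective_add_of_mem_flatDirections [CompleteSpace Z]
    (hlsc : LowerSemicontinuous h) (hconvex : ConvexEReal h) {z₁ : Z} {t₁ : ℝ}
    (hz₁ : h z₁ = t₁) {d : Z} (hd : d ∈ flatDirections E h) (z : Z) :
    penalizedObjective E e h (z + d) = penalizedObjective E e h z := by
  obtain ⟨hEd, hdS⟩ := (mem_flatDirections_iff E).1 hd
  have hinvariant : h (z + d) = h z := by
    refine le_antisymm (apply_add_le_of_forall_inner_eq_zero hlsc hconvex hz₁ hdS z) ?_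
    simpa using apply_add_le_of_forall_inner_eq_zero hlsc hconvex hz₁ (d := -d)
      (fun v hv => by rw [inner_neg_right, hdS v hv, neg_zero]) (z + d)
  rw [penalizedObjective, penalizedObjective, map_add, hEd, add_zero, hinvariant]

theorem le_coe_sub_of_penalizedObjective_le {z : Z} {b : ℝ}
    (hz : penalizedObjective E e h z ≤ b) : h z ≤ ((b - 1 / 2 * ‖E z - e‖ ^ 2 : ℝ) : EReal) := by
  rwa [EReal.coe_sub, EReal.le_sub_iff_add_le (.inl (EReal.coe_ne_bot _))
    (.inl (EReal.coe_ne_top _))]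

theorem isBounded_orthogonal_flatDirections_inter_sublevel [FiniteDimensional ℝ Z]
    [FiniteDimensional ℝ Zt] {u₀ : Zt}
    (hu₀ : LinearMap.adjoint E u₀ ∈ intrinsicInterior ℝ {v | fenchelConjugate h v ≠ ⊤}) (b : ℝ) :
    Bornology.IsBounded
      (((flatDirections E h)ᗮ : Set Z) ∩ penalizedObjective E e h ⁻¹' Set.Iic (b : EReal)) := by
  set T := ((flatDirections E h)ᗮ : Set Z) ∩ penalizedObjective E e h ⁻¹' Set.Iic (b : EReal)
  have hdom (v : Z) (hv : fenchelConjugate h v ≠ ⊤) :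
      ∃ s : ℝ, ∀ z ∈ T, ⟪v, z⟫ + 1 / 2 * ‖E z - e‖ ^ 2 ≤ b + s :=
    ⟨(fenchelConjugate h v).toReal, fun z hz => by
      linarith [inner_le_add_of_le_of_fenchelConjugate_le
        (le_coe_sub_of_penalizedObjective_le E e hz.2) (EReal.le_coe_toReal hv)]⟩
  have hdom_inner (v : Z) (hv : fenchelConjugate h v ≠ ⊤) : ∃ s : ℝ, ∀ z ∈ T, ⟪v, z⟫ ≤ b + s := by
    obtain ⟨s, hs⟩ := hdom v hv
    exact ⟨s, fun z hz => by linarith [hs z hz, show 0 ≤ 1 / 2 * ‖E z - e‖ ^ 2 by positivity]⟩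
  obtain ⟨R, hR⟩ : ∃ R, ∀ z ∈ T, ‖E z‖ ≤ R := by
    obtain ⟨s₀, hs₀⟩ := hdom _ (intrinsicInterior_subset hu₀)
    obtain ⟨R, hR⟩ := exists_norm_le_of_inner_add_half_norm_sub_sq_le u₀ e (b + s₀)
    exact ⟨R, fun z hz => hR _ (LinearMap.adjoint_inner_left E z u₀ ▸ hs₀ z hz)⟩
  by_contra hunbounded
  obtain ⟨d, hd0, hd⟩ := exists_ne_zero_forall_inner_nonpos_of_not_isBounded hunbounded
  have hd_eq (v : Z) (C : ℝ) (hC : ∀ z ∈ T, |⟪v, z⟫| ≤ C) : ⟪v, d⟫ = 0 := by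
    refine le_antisymm (hd v C fun z hz => (le_abs_self _).trans (hC z hz)) ?_
    simpa [inner_neg_left] using hd (-v) C fun z hz => by
      simpa [inner_neg_left] using (neg_le_abs _).trans (hC z hz)
  have hEd : E d = 0 := by
    have := hd_eq (LinearMap.adjoint E (E d)) (‖E d‖ * R) fun z hz => by
      rw [LinearMap.adjoint_inner_left]
      exact (abs_real_inner_le_norm _ _).trans
        (mul_le_mul_of_nonneg_left (hR z hz) (norm_nonneg _))
    rwa [LinearMap.adjoint_inner_left, inner_self_eq_zero] at this
  have hdS (v : Z) (hv : fenchelConjugate h v ≠ ⊤) : ⟪v, d⟫ = 0 := by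
    refine inner_eq_zero_of_mem_intrinsicInterior hu₀ (fun v hv => ?_) ?_ hv
    · obtain ⟨s, hs⟩ := hdom_inner v hv
      exact hd v _ hs
    · rw [LinearMap.adjoint_inner_left, hEd, inner_zero_right]
  have hdL : d ∈ flatDirections E h := (mem_flatDirections_iff E).2 ⟨hEd, hdS⟩
  have hdL' : d ∈ (flatDirections E h)ᗮ := (Submodule.mem_orthogonal _ d).2 fun w hw =>
    hd_eq w 0 fun z hz => by rw [Submodule.inner_right_of_mem_orthogonal hw hz.1, abs_zero]
  have : d ∈ flatDirections E h ⊓ (flatDirections E h)ᗮ := ⟨hdL, hdL'⟩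
  rw [Submodule.inf_orthogonal_eq_bot, Submodule.mem_bot] at this
  exact hd0 this

end Penalized

theorem stmt19_general {Z Zt : Type*} [NormedAddCommGroup Z] [InnerProductSpace ℝ Z]
    [FiniteDimensional ℝ Z]
    [NormedAddCommGroup Zt] [InnerProductSpace ℝ Zt] [FiniteDimensional ℝ Zt]
    (E : Z →ₗ[ℝ] Zt) (e : Zt)
    (h : Z → EReal)
    (hproper : (∀ z, h z ≠ ⊥) ∧ ∃ z, h z ≠ ⊤)
    (hlsc : LowerSemicontinuous h)
    (hconvex : ∀ z z' : Z, ∀ a b : ℝ, 0 ≤ a → 0 ≤ b → a + b = 1 →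
      h (a • z + b • z') ≤ (a : EReal) * h z + (b : EReal) * h z')
    (hstar : Z → EReal)
    (hhstar : ∀ v : Z, hstar v = ⨆ z : Z, ((⟪v, z⟫ : ℝ) : EReal) - h z)
    (hfeas : ∃ z : Z, E z = e ∧ h z < ⊤)
    (hri : (intrinsicInterior ℝ {v : Z | hstar v ≠ ⊤} ∩
      Set.range (LinearMap.adjoint E)).Nonempty) :
    ∃ z₀ : Z, ∀ z : Z,
      h z₀ + ((1 / 2 * ‖E z₀ - e‖ ^ 2 : ℝ) : EReal) ≤
        h z + ((1 / 2 * ‖E z - e‖ ^ 2 : ℝ) : EReal) := by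
  obtain rfl : hstar = fenchelConjugate h := funext hhstar
  obtain ⟨_, hri, u₀, rfl⟩ := hri
  obtain ⟨zb, hEzb, hzb⟩ := hfeas
  have hzb_coe : h zb = (h zb).toReal := (EReal.coe_toReal hzb.ne (hproper.1 zb)).symm
  exact exists_forall_le_of_isBounded_orthogonal_inter_sublevel (F := penalizedObjective E e h)
    (lowerSemicontinuous_penalizedObjective E e hlsc) (flatDirections E h)
    (fun d hd => penalizedObjective_add_of_mem_flatDirections E e hlsc hconvex hzb_coe hd)
    (z₁ := zb) (b := (h zb).toReal) (by simp [penalizedObjective, hEzb, ← hzb_coe])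
    (isBounded_orthogonal_flatDirections_inter_sublevel E e hri _)

/-- Existence of an optimal solution for the penalized problem
`inf h(z) + (1/2)‖Ez - e‖²`: if `e ∈ Im E`, `h` is proper closed convex,
`inf{h(z) : Ez = e} < ∞`, and `ri(dom h*) ∩ Im(E*) ≠ ∅`, then
`inf{h(z) + (1/2)‖Ez - e‖²}` is attained. -/
theorem stmt19 {Z Zt : Type*} [NormedAddCommGroup Z] [InnerProductSpace ℝ Z]
    [FiniteDimensional ℝ Z]
    [NormedAddCommGroup Zt] [InnerProductSpace ℝ Zt] [FiniteDimensional ℝ Zt]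
    (E : Z →ₗ[ℝ] Zt) (e : Zt) (he : e ∈ Set.range E)
    (h : Z → EReal)
    (hproper : (∀ z, h z ≠ ⊥) ∧ ∃ z, h z ≠ ⊤)
    (hlsc : LowerSemicontinuous h)
    (hconvex : ∀ z z' : Z, ∀ a b : ℝ, 0 ≤ a → 0 ≤ b → a + b = 1 →
      h (a • z + b • z') ≤ (a : EReal) * h z + (b : EReal) * h z')
    (hstar : Z → EReal)
    (hhstar : ∀ v : Z, hstar v = ⨆ z : Z, ((⟪v, z⟫ : ℝ) : EReal) - h z)
    (hfeas : ∃ z : Z, E z = e ∧ h z < ⊤)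
    (hri : (intrinsicInterior ℝ {v : Z | hstar v ≠ ⊤} ∩
      Set.range (LinearMap.adjoint E)).Nonempty) :
    ∃ z₀ : Z, ∀ z : Z,
      h z₀ + ((1 / 2 * ‖E z₀ - e‖ ^ 2 : ℝ) : EReal) ≤
        h z + ((1 / 2 * ‖E z - e‖ ^ 2 : ℝ) : EReal) :=
  stmt19_general E e h hproper hlsc hconvex hstar hhstar hfeas hri
end
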